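/- arXiv:2402.10282 — 7 statements merged into one kernel-verified Lean document; each statement's English description precedes it below -/
import Mathlib

section
/- Let X and Y be discrete random variables taking values in finite sets 𝒳 and 𝒴, with joint distribution P_{X,Y}. Then the chi-squared mutual information I_{χ²}(X;Y) := χ²(P_{X,Y} || P_X ⊗ P_Y) satisfies I_{χ²}(X;Y) ≤ |𝒳| − 1. -/
/-!
Write `q(x, y) = P_X(x) P_Y(y)`. Expanding the square, the chi-squared mutual information equals
`∑ p(x, y)² / q(x, y) - 1`, and since `p(x, y) ≤ P_Y(y)` each term satisfies
`p(x, y)² / q(x, y) ≤ p(x, y) / P_X(x)`; summing over `y` gives at most `1` for every `x`.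
-/

open Finset

theorem mul_div_sub_one_sq_eq {K : Type*} [Field K] {p q : K} (h : q = 0 → p = 0) :
    q * (p / q - 1) ^ 2 = p ^ 2 / q - 2 * p + q := by
  rcases eq_or_ne q 0 with hq | hq
  · simp [hq, h hq]
  · field_simp
    ring

theorem sq_div_mul_le_div {K : Type*} [Field K] [LinearOrder K] [IsStrictOrderedRing K]
    {p a b : K} (hp : 0 ≤ p) (ha : 0 ≤ a) (hpb : p ≤ b) :
    p ^ 2 / (a * b) ≤ p / a := by
  rw [sq, mul_div_mul_comm]
  exact mul_le_of_le_one_right (div_nonneg hp ha) (div_le_one_of_le₀ hpb (hp.trans hpb))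

section Marginals

variable {X Y : Type*} {p : X × Y → ℝ}

theorem apply_le_sum_fst [Fintype Y] (h0 : ∀ z, 0 ≤ p z) (x : X) (y : Y) : p (x, y) ≤ ∑ y', p (x, y') :=
  single_le_sum (fun y' _ => h0 (x, y')) (mem_univ y)

theorem apply_le_sum_snd [Fintype X] (h0 : ∀ z, 0 ≤ p z) (x : X) (y : Y) : p (x, y) ≤ ∑ x', p (x', y) :=
  single_le_sum (fun x' _ => h0 (x', y)) (mem_univ x)

theorem eq_zero_of_marginals_mul_eq_zero [Fintype X] [Fintype Y] (h0 : ∀ z, 0 ≤ p z) (x : X) (y : Y)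
    (h : (∑ y', p (x, y')) * (∑ x', p (x', y)) = 0) : p (x, y) = 0 := by
  rcases mul_eq_zero.mp h with h | h
  · exact le_antisymm (h ▸ apply_le_sum_fst h0 x y) (h0 _)
  · exact le_antisymm (h ▸ apply_le_sum_snd h0 x y) (h0 _)

theorem sum_sq_div_marginals_le_one [Fintype X] [Fintype Y] (h0 : ∀ z, 0 ≤ p z) (x : X) :
    ∑ y, p (x, y) ^ 2 / ((∑ y', p (x, y')) * (∑ x', p (x', y))) ≤ 1 :=
  calc ∑ y, p (x, y) ^ 2 / ((∑ y', p (x, y')) * (∑ x', p (x', y)))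
      ≤ ∑ y, p (x, y) / ∑ y', p (x, y') :=
        sum_le_sum fun y _ => sq_div_mul_le_div (h0 _)
          (sum_nonneg fun y' _ => h0 (x, y')) (apply_le_sum_snd h0 x y)
    _ = (∑ y, p (x, y)) / ∑ y', p (x, y') := (sum_div _ _ _).symm
    _ ≤ 1 := div_self_le_one _

theorem sum_sum_marginals_mul [Fintype X] [Fintype Y] (h1 : ∑ z, p z = 1) :
    ∑ x, ∑ y, (∑ y', p (x, y')) * (∑ x', p (x', y)) = 1 := by
  rw [← sum_mul_sum, ← Fintype.sum_prod_type, ← Fintype.sum_prod_type_right, h1, one_mul]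

end Marginals

/-- For a joint distribution `p` of discrete random variables on finite
sets `X` and `Y`, the chi-squared mutual information
`I_{χ²}(X;Y) = χ²(P_{X,Y} ‖ P_X ⊗ P_Y)` is at most `|X| - 1`. -/
theorem chiSq_mutual_info_le_card_sub_one {X Y : Type*} [Fintype X] [Fintype Y]
    (p : X × Y → ℝ) (h0 : ∀ z, 0 ≤ p z) (h1 : ∑ z, p z = 1) :
    ∑ x, ∑ y,
        ((∑ y', p (x, y')) * (∑ x', p (x', y))) *
          (p (x, y) / ((∑ y', p (x, y')) * (∑ x', p (x', y))) - 1) ^ 2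
      ≤ (Fintype.card X : ℝ) - 1 := by
  set q : X → Y → ℝ := fun x y => (∑ y', p (x, y')) * (∑ x', p (x', y)) with hq
  have hsq : ∑ x, ∑ y, p (x, y) ^ 2 / q x y ≤ Fintype.card X := by
    simpa using sum_le_sum fun x (_ : x ∈ univ) => sum_sq_div_marginals_le_one h0 x
  calc ∑ x, ∑ y, q x y * (p (x, y) / q x y - 1) ^ 2
      = ∑ x, ∑ y, (p (x, y) ^ 2 / q x y - 2 * p (x, y) + q x y) :=
        sum_congr rfl fun x _ => sum_congr rfl fun y _ =>
          mul_div_sub_one_sq_eq (eq_zero_of_marginals_mul_eq_zero h0 x y)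
    _ = ∑ x, ∑ y, p (x, y) ^ 2 / q x y - 2 * ∑ z, p z + ∑ x, ∑ y, q x y := by
        simp only [sum_add_distrib, sum_sub_distrib, mul_sum, Fintype.sum_prod_type]
    _ ≤ Fintype.card X - 1 := by
        rw [h1, hq, sum_sum_marginals_mul h1]
        linarith
end

section
/- Let Θ be a finite set of probability distributions on a finite outcome set 𝒳. Then the chi-squared capacity C(Θ) satisfies C(Θ) ≤ Σ_{x∈𝒳} max_{θ∈Θ} θ(x) − 1. -/
/-!
Fix an outcome `x` and write `q = ∑ j, τ j * θ j x` for the mixture. For `q > 0` the `τ`-average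
of `q * (θ i x / q - 1) ^ 2` is `(∑ i, τ i * θ i x ^ 2) / q - q`, and since
`θ i x ^ 2 ≤ (max_j θ j x) * θ i x` the first term is at most `max_j θ j x`. Summing the
resulting bound `max_j θ j x - q` over `x` uses that the mixture has total mass one.
-/

open Finset

section
variable {ι : Type*} [Fintype ι]

lemma sum_mul_sq_le_iSup_mul_sum (w a : ι → ℝ) (hwa : ∀ i, 0 ≤ w i * a i) :
    ∑ i, w i * a i ^ 2 ≤ (⨆ i, a i) * ∑ i, w i * a i := by
  rw [mul_sum]
  refine sum_le_sum fun i _ => ?_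
  calc w i * a i ^ 2 = (w i * a i) * a i := by ring
    _ ≤ (w i * a i) * ⨆ i, a i :=
        mul_le_mul_of_nonneg_left (le_ciSup (Set.finite_range a).bddAbove i) (hwa i)
    _ = (⨆ i, a i) * (w i * a i) := mul_comm _ _

lemma sum_mul_mul_div_sub_one_sq_eq (w a : ι → ℝ) (hw : ∑ i, w i = 1)
    (hq : ∑ j, w j * a j ≠ 0) :
    ∑ i, w i * ((∑ j, w j * a j) * (a i / (∑ j, w j * a j) - 1) ^ 2)
      = (∑ i, w i * a i ^ 2) / (∑ j, w j * a j) - ∑ j, w j * a j := by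
  set q := ∑ j, w j * a j with hq_def
  have expand : ∀ i,
      w i * (q * (a i / q - 1) ^ 2) = w i * a i ^ 2 / q - 2 * (w i * a i) + w i * q := by
    intro i
    field_simp
    ring
  rw [sum_congr rfl fun i _ => expand i, sum_add_distrib, sum_sub_distrib, ← sum_div, ← mul_sum,
    ← sum_mul, hw, ← hq_def]
  ring

/-- Since `0 * (t / 0 - 1) ^ 2 = 0`, the left side vanishes when the mixture is zero. -/
lemma sum_mul_mul_div_sub_one_sq_le (w a : ι → ℝ) (hw0 : ∀ i, 0 ≤ w i) (hw1 : ∑ i, w i = 1)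
    (ha : ∀ i, 0 ≤ a i) :
    ∑ i, w i * ((∑ j, w j * a j) * (a i / (∑ j, w j * a j) - 1) ^ 2)
      ≤ (⨆ i, a i) - ∑ j, w j * a j := by
  have hq0 : 0 ≤ ∑ j, w j * a j := sum_nonneg fun j _ => mul_nonneg (hw0 j) (ha j)
  rcases hq0.eq_or_lt with hq | hq
  · rw [← hq]
    simpa using Real.iSup_nonneg ha
  · rw [sum_mul_mul_div_sub_one_sq_eq w a hw1 hq.ne', sub_le_sub_iff_right, div_le_iff₀ hq]
    exact sum_mul_sq_le_iSup_mul_sum w a fun i => mul_nonneg (hw0 i) (ha i)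

end

lemma sum_sum_mul_eq_one {X ι : Type*} [Fintype X] [Fintype ι] (θ : ι → X → ℝ)
    (hθ : ∀ i, ∑ x, θ i x = 1) (τ : ι → ℝ) (hτ : ∑ i, τ i = 1) :
    ∑ x, ∑ j, τ j * θ j x = 1 := by
  rw [sum_comm]
  simp [← mul_sum, hθ, hτ]

/-- The capacity is a supremum over priors `τ`, so it suffices to bound the value at each `τ`.
The inner sum is `χ²(θ i ‖ q)` with `0 * (t / 0 - 1) ^ 2 = 0` in place of the convention
`a² / 0 = ∞`; the two differ only for `τ i = 0`, where the term is weighted by zero. -/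
theorem capacity_le_sum_max_sub_one_general {X ι : Type*} [Fintype X] [Fintype ι]
    (θ : ι → X → ℝ) (hθ0 : ∀ i x, 0 ≤ θ i x) (hθ1 : ∀ i, ∑ x, θ i x = 1)
    (τ : ι → ℝ) (hτ0 : ∀ i, 0 ≤ τ i) (hτ1 : ∑ i, τ i = 1) :
    ∑ i, τ i * ∑ x, (∑ j, τ j * θ j x) * (θ i x / (∑ j, τ j * θ j x) - 1) ^ 2
      ≤ (∑ x, ⨆ i, θ i x) - 1 := by
  calc ∑ i, τ i * ∑ x, (∑ j, τ j * θ j x) * (θ i x / (∑ j, τ j * θ j x) - 1) ^ 2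
      = ∑ x, ∑ i, τ i * ((∑ j, τ j * θ j x) * (θ i x / (∑ j, τ j * θ j x) - 1) ^ 2) := by
        simp_rw [mul_sum]
        exact sum_comm
    _ ≤ ∑ x, ((⨆ i, θ i x) - ∑ j, τ j * θ j x) :=
        sum_le_sum fun x _ =>
          sum_mul_mul_div_sub_one_sq_le τ (θ · x) hτ0 hτ1 fun i => hθ0 i x
    _ = (∑ x, ⨆ i, θ i x) - 1 := by rw [sum_sub_distrib, sum_sum_mul_eq_one θ hθ1 τ hτ1]

/-- The chi-squared capacity of a finite set of distributions `θ i` on a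
finite outcome set `X` is bounded by `∑ x, max_i θ i x − 1`.  Since the capacity is the
supremum over priors `τ`, the claim is stated for every prior `τ`. -/
theorem capacity_le_sum_max_sub_one {X ι : Type*} [Fintype X] [Fintype ι] [Nonempty ι]
    (θ : ι → X → ℝ) (hθ0 : ∀ i x, 0 ≤ θ i x) (hθ1 : ∀ i, ∑ x, θ i x = 1)
    (τ : ι → ℝ) (hτ0 : ∀ i, 0 ≤ τ i) (hτ1 : ∑ i, τ i = 1) :
    ∑ i, τ i * ∑ x, (∑ j, τ j * θ j x) * (θ i x / (∑ j, τ j * θ j x) - 1) ^ 2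
      ≤ (∑ x, ⨆ i, θ i x) - 1 :=
  capacity_le_sum_max_sub_one_general θ hθ0 hθ1 τ hτ0 hτ1
end

section
/- For every r ∈ (0,1) and every x ∈ [0,∞), it holds that r(1−r)(x−1)² / (r(x−1)+1) ≤ (√x − 1)². -/
/-- For every `r ∈ (0,1)` and `x ∈ [0,∞)`,
`r(1−r)(x−1)²/(r(x−1)+1) ≤ (√x − 1)²`. -/
theorem vincze_le_cam_generator_le_hellinger_generator
    (r x : ℝ) (hr : r ∈ Set.Ioo (0 : ℝ) 1) (hx : 0 ≤ x) :
    r * (1 - r) * (x - 1) ^ 2 / (r * (x - 1) + 1) ≤ (Real.sqrt x - 1) ^ 2 := by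
  obtain ⟨hr0, hr1⟩ := hr
  have hs : Real.sqrt x ^ 2 = x := Real.sq_sqrt hx
  have hsnn : 0 ≤ Real.sqrt x := Real.sqrt_nonneg x
  have hd : 0 < r * (x - 1) + 1 := by nlinarith
  rw [div_le_iff₀ hd]
  have hx1 : x - 1 = (Real.sqrt x - 1) * (Real.sqrt x + 1) := by nlinarith
  rw [hx1]
  nlinarith [sq_nonneg ((Real.sqrt x - 1) * (r * Real.sqrt x - (1 - r)))]
end

section
/- For any two probability distributions θ₁, θ₂ on a finite set, the chi-squared capacity C(θ₁,θ₂) := sup_{r∈[0,1]} r(1−r) Σ_x (θ₁(x)−θ₂(x))²/(r θ₁(x)+(1−r)θ₂(x)) satisfies C(θ₁,θ₂) ≤ 2H²(θ₁,θ₂), where H²(θ₁,θ₂) = (1/2) Σ_x (√θ₁(x) − √θ₂(x))² is the squared Hellinger distance. -/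
open Finset

/-!
Termwise: writing `a = u²`, `b = v²`, the summand `r(1-r)(a-b)²/(ra+(1-r)b)` equals
`(u-v)² · r(1-r)(u+v)²/(ru²+(1-r)v²)`, and `ru² + (1-r)v² - r(1-r)(u+v)² = (ru - (1-r)v)² ≥ 0`.
So every summand is at most `(√a - √b)²` for each `r`, and hence so is the supremum.
-/

theorem mul_one_sub_mul_add_sq_le (r u v : ℝ) :
    r * (1 - r) * (u + v) ^ 2 ≤ r * u ^ 2 + (1 - r) * v ^ 2 := by
  nlinarith [sq_nonneg (r * u - (1 - r) * v)]

theorem mul_one_sub_mul_sq_sub_div_le_sq_sqrt_sub {a b r : ℝ} (ha : 0 ≤ a) (hb : 0 ≤ b)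
    (hd : 0 ≤ r * a + (1 - r) * b) :
    r * (1 - r) * ((a - b) ^ 2 / (r * a + (1 - r) * b)) ≤ (Real.sqrt a - Real.sqrt b) ^ 2 := by
  rcases hd.eq_or_lt with hd | hd
  · rw [← hd, div_zero, mul_zero]
    positivity
  obtain ⟨u, hu, rfl⟩ : ∃ u, 0 ≤ u ∧ u ^ 2 = a := ⟨_, Real.sqrt_nonneg a, Real.sq_sqrt ha⟩
  obtain ⟨v, hv, rfl⟩ : ∃ v, 0 ≤ v ∧ v ^ 2 = b := ⟨_, Real.sqrt_nonneg b, Real.sq_sqrt hb⟩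
  rw [Real.sqrt_sq hu, Real.sqrt_sq hv, mul_div_assoc', div_le_iff₀ hd]
  calc r * (1 - r) * (u ^ 2 - v ^ 2) ^ 2
      = (u - v) ^ 2 * (r * (1 - r) * (u + v) ^ 2) := by ring
    _ ≤ (u - v) ^ 2 * (r * u ^ 2 + (1 - r) * v ^ 2) :=
        mul_le_mul_of_nonneg_left (mul_one_sub_mul_add_sq_le r u v) (sq_nonneg _)

theorem capacity_two_le_two_hellinger_general {X : Type*} [Fintype X]
    (θ₁ θ₂ : X → ℝ)
    (h₁0 : ∀ x, 0 ≤ θ₁ x) (h₂0 : ∀ x, 0 ≤ θ₂ x) :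
    sSup ((fun r : ℝ =>
        r * (1 - r) * ∑ x, (θ₁ x - θ₂ x) ^ 2 / (r * θ₁ x + (1 - r) * θ₂ x)) ''
          Set.Icc (0 : ℝ) 1)
      ≤ 2 * ((1 / 2) * ∑ x, (Real.sqrt (θ₁ x) - Real.sqrt (θ₂ x)) ^ 2) := by
  refine csSup_le ((Set.nonempty_Icc.2 zero_le_one).image _) ?_
  rintro _ ⟨r, ⟨hr0, hr1⟩, rfl⟩
  rw [← mul_assoc, mul_one_div_cancel two_ne_zero, one_mul]
  beta_reduce
  rw [mul_sum]
  refine sum_le_sum fun x _ => mul_one_sub_mul_sq_sub_div_le_sq_sqrt_sub (h₁0 x) (h₂0 x) ?_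
  exact add_nonneg (mul_nonneg hr0 (h₁0 x)) (mul_nonneg (sub_nonneg.2 hr1) (h₂0 x))

/-- For two distributions on a finite set, the chi-squared capacity
`C(θ₁,θ₂) = sup_{r∈[0,1]} r(1−r) ∑_x (θ₁ x − θ₂ x)²/(r θ₁ x + (1−r) θ₂ x)` is at most
twice the squared Hellinger distance `H²(θ₁,θ₂) = (1/2) ∑_x (√(θ₁ x) − √(θ₂ x))²`. -/
theorem capacity_two_le_two_hellinger {X : Type*} [Fintype X]
    (θ₁ θ₂ : X → ℝ)
    (h₁0 : ∀ x, 0 ≤ θ₁ x) (h₂0 : ∀ x, 0 ≤ θ₂ x)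
    (h₁1 : ∑ x, θ₁ x = 1) (h₂1 : ∑ x, θ₂ x = 1) :
    sSup ((fun r : ℝ =>
        r * (1 - r) * ∑ x, (θ₁ x - θ₂ x) ^ 2 / (r * θ₁ x + (1 - r) * θ₂ x)) ''
          Set.Icc (0 : ℝ) 1)
      ≤ 2 * ((1 / 2) * ∑ x, (Real.sqrt (θ₁ x) - Real.sqrt (θ₂ x)) ^ 2) :=
  capacity_two_le_two_hellinger_general θ₁ θ₂ h₁0 h₂0
end

section
/- For any two probability distributions P, Q on a finite set, the chain of inequalities δ(P,Q)² ≤ Δ(P,Q)/2 ≤ C(P,Q) ≤ 2H²(P,Q) ≤ Δ(P,Q) ≤ 2δ(P,Q) holds, where δ is total variation distance, Δ is triangular discrimination, H² is squared Hellinger distance, and C is the two-distribution chi-squared capacity. -/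
/-!
Every divergence in the chain is a sum over `x` of a function of the pair `(P x, Q x)`, so all
inequalities except the first are termwise. Writing `a = √p`, `b = √q`, they read
`r (1 - r) (a² - b²)² ≤ (a - b)² (r a² + (1 - r) b²)`, `(a - b)² (a² + b²) ≤ (a² - b²)²` and
`(p - q)² ≤ |p - q| (p + q)`. The capacity is at least its value at `r = 1/2`, which is `Δ/2`, and
the first inequality is Cauchy–Schwarz for `|P x - Q x| = √((P x - Q x)²/(P x + Q x)) · √(P x + Q x)`
together with `∑ x, (P x + Q x) = 2`.
-/

open Finset

section Termwise

variable {p q : ℝ}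

lemma sq_sub_div_add_mul_add (hp : 0 ≤ p) (hq : 0 ≤ q) :
    (p - q) ^ 2 / (p + q) * (p + q) = (p - q) ^ 2 := by
  rcases (add_nonneg hp hq).eq_or_lt with h | h
  · obtain rfl : p = 0 := by linarith
    obtain rfl : q = 0 := by linarith
    simp
  · exact div_mul_cancel₀ _ h.ne'

lemma sq_sub_div_add_le_abs_sub (hp : 0 ≤ p) (hq : 0 ≤ q) :
    (p - q) ^ 2 / (p + q) ≤ |p - q| := by
  rcases (add_nonneg hp hq).eq_or_lt with h | h
  · rw [← h, div_zero]
    positivity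
  · rw [div_le_iff₀ h, ← sq_abs, sq]
    exact mul_le_mul_of_nonneg_left (abs_sub_le_iff.2 ⟨by linarith, by linarith⟩) (abs_nonneg _)

lemma sqrt_sub_sqrt_sq_le_sq_sub_div_add (hp : 0 ≤ p) (hq : 0 ≤ q) :
    (√p - √q) ^ 2 ≤ (p - q) ^ 2 / (p + q) := by
  rcases (add_nonneg hp hq).eq_or_lt with h | h
  · obtain rfl : p = 0 := by linarith
    obtain rfl : q = 0 := by linarith
    simp
  · obtain ⟨a, ha, rfl⟩ : ∃ a, 0 ≤ a ∧ a ^ 2 = p := ⟨√p, Real.sqrt_nonneg p, Real.sq_sqrt hp⟩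
    obtain ⟨b, hb, rfl⟩ : ∃ b, 0 ≤ b ∧ b ^ 2 = q := ⟨√q, Real.sqrt_nonneg q, Real.sq_sqrt hq⟩
    rw [le_div_iff₀ h, Real.sqrt_sq ha, Real.sqrt_sq hb]
    nlinarith [mul_nonneg ha hb, sq_nonneg (a - b)]

lemma mul_one_sub_mul_sq_sub_div_le_sqrt_sub_sqrt_sq (hp : 0 ≤ p) (hq : 0 ≤ q) {r : ℝ}
    (hr : r ∈ Set.Icc (0 : ℝ) 1) :
    r * (1 - r) * ((p - q) ^ 2 / (r * p + (1 - r) * q)) ≤ (√p - √q) ^ 2 := by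
  obtain ⟨hr0, hr1⟩ := hr
  have hs : 0 ≤ 1 - r := sub_nonneg.2 hr1
  rcases (by positivity : 0 ≤ r * p + (1 - r) * q).eq_or_lt with h | h
  · rw [← h, div_zero, mul_zero]
    positivity
  · obtain ⟨a, ha, rfl⟩ : ∃ a, 0 ≤ a ∧ a ^ 2 = p := ⟨√p, Real.sqrt_nonneg p, Real.sq_sqrt hp⟩
    obtain ⟨b, hb, rfl⟩ : ∃ b, 0 ≤ b ∧ b ^ 2 = q := ⟨√q, Real.sqrt_nonneg q, Real.sq_sqrt hq⟩
    rw [mul_div_assoc', div_le_iff₀ h, Real.sqrt_sq ha, Real.sqrt_sq hb]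
    -- the difference of the two sides is `((a - b) (r a - (1 - r) b))²`
    nlinarith [sq_nonneg ((a - b) * (r * a - (1 - r) * b))]

end Termwise

section Divergences

variable {X : Type*} [Fintype X]

noncomputable def tvDist (P Q : X → ℝ) : ℝ := (1 / 2) * ∑ x, |P x - Q x|

noncomputable def triangularDiscrimination (P Q : X → ℝ) : ℝ :=
  ∑ x, (P x - Q x) ^ 2 / (P x + Q x)

noncomputable def hellingerSq (P Q : X → ℝ) : ℝ := (1 / 2) * ∑ x, (√(P x) - √(Q x)) ^ 2

noncomputable def chiSqMixture (P Q : X → ℝ) (r : ℝ) : ℝ :=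
  r * (1 - r) * ∑ x, (P x - Q x) ^ 2 / (r * P x + (1 - r) * Q x)

noncomputable def chiSqCapacity (P Q : X → ℝ) : ℝ := sSup (chiSqMixture P Q '' Set.Icc 0 1)

variable {P Q : X → ℝ}

lemma chiSqMixture_one_half :
    chiSqMixture P Q (1 / 2) = triangularDiscrimination P Q / 2 := by
  rw [chiSqMixture, triangularDiscrimination, mul_sum, sum_div]
  refine sum_congr rfl fun x _ => ?_
  rw [show 1 / 2 * P x + (1 - 1 / 2) * Q x = (P x + Q x) / 2 by ring, div_div_eq_mul_div]
  ring

variable (hP : ∀ x, 0 ≤ P x) (hQ : ∀ x, 0 ≤ Q x)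
include hP hQ

lemma tvDist_sq_le_triangularDiscrimination_div_two (hPQ : ∑ x, (P x + Q x) ≤ 2) :
    tvDist P Q ^ 2 ≤ triangularDiscrimination P Q / 2 := by
  have hCS : (∑ x, |P x - Q x|) ^ 2 ≤ triangularDiscrimination P Q * ∑ x, (P x + Q x) :=
    sum_sq_le_sum_mul_sum_of_sq_le_mul _
      (fun x _ => div_nonneg (sq_nonneg _) (add_nonneg (hP x) (hQ x)))
      (fun x _ => add_nonneg (hP x) (hQ x))
      (fun x _ => by rw [sq_abs, sq_sub_div_add_mul_add (hP x) (hQ x)])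
  have hΔ : 0 ≤ triangularDiscrimination P Q :=
    sum_nonneg fun x _ => div_nonneg (sq_nonneg _) (add_nonneg (hP x) (hQ x))
  unfold tvDist
  nlinarith [mul_le_mul_of_nonneg_left hPQ hΔ]

lemma chiSqMixture_le_two_mul_hellingerSq {r : ℝ} (hr : r ∈ Set.Icc (0 : ℝ) 1) :
    chiSqMixture P Q r ≤ 2 * hellingerSq P Q := by
  rw [chiSqMixture, hellingerSq, ← mul_assoc, mul_one_div_cancel two_ne_zero, one_mul, mul_sum]
  exact sum_le_sum fun x _ => mul_one_sub_mul_sq_sub_div_le_sqrt_sub_sqrt_sq (hP x) (hQ x) hr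

lemma chiSqCapacity_le_two_mul_hellingerSq : chiSqCapacity P Q ≤ 2 * hellingerSq P Q :=
  csSup_le ((Set.nonempty_Icc.2 zero_le_one).image _) <| by
    rintro _ ⟨r, hr, rfl⟩
    exact chiSqMixture_le_two_mul_hellingerSq hP hQ hr

lemma triangularDiscrimination_div_two_le_chiSqCapacity :
    triangularDiscrimination P Q / 2 ≤ chiSqCapacity P Q := by
  refine le_csSup ⟨2 * hellingerSq P Q, ?_⟩ ⟨1 / 2, by norm_num, chiSqMixture_one_half⟩
  rintro _ ⟨r, hr, rfl⟩
  exact chiSqMixture_le_two_mul_hellingerSq hP hQ hr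

lemma two_mul_hellingerSq_le_triangularDiscrimination :
    2 * hellingerSq P Q ≤ triangularDiscrimination P Q := by
  rw [hellingerSq, ← mul_assoc, mul_one_div_cancel two_ne_zero, one_mul]
  exact sum_le_sum fun x _ => sqrt_sub_sqrt_sq_le_sq_sub_div_add (hP x) (hQ x)

lemma triangularDiscrimination_le_two_mul_tvDist :
    triangularDiscrimination P Q ≤ 2 * tvDist P Q := by
  rw [tvDist, ← mul_assoc, mul_one_div_cancel two_ne_zero, one_mul]
  exact sum_le_sum fun x _ => sq_sub_div_add_le_abs_sub (hP x) (hQ x)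

end Divergences

/-- For any two distributions `P, Q` on a finite set, the chain
`δ(P,Q)² ≤ Δ(P,Q)/2 ≤ C(P,Q) ≤ 2H²(P,Q) ≤ Δ(P,Q) ≤ 2δ(P,Q)` holds, where `δ` is the
total variation distance, `Δ` the triangular discrimination, `H²` the squared Hellinger
distance, and `C` the two-distribution chi-squared capacity
`C(P,Q) = sup_{r∈[0,1]} r(1−r) ∑_x (P x − Q x)²/(r P x + (1−r) Q x)`. -/
theorem divergence_chain {X : Type*} [Fintype X]
    (P Q : X → ℝ)
    (hP0 : ∀ x, 0 ≤ P x) (hQ0 : ∀ x, 0 ≤ Q x)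
    (hP1 : ∑ x, P x = 1) (hQ1 : ∑ x, Q x = 1) :
    ((1 / 2) * ∑ x, |P x - Q x|) ^ 2 ≤ (∑ x, (P x - Q x) ^ 2 / (P x + Q x)) / 2 ∧
    (∑ x, (P x - Q x) ^ 2 / (P x + Q x)) / 2 ≤
      sSup ((fun r : ℝ =>
          r * (1 - r) * ∑ x, (P x - Q x) ^ 2 / (r * P x + (1 - r) * Q x)) ''
            Set.Icc (0 : ℝ) 1) ∧
    sSup ((fun r : ℝ =>
          r * (1 - r) * ∑ x, (P x - Q x) ^ 2 / (r * P x + (1 - r) * Q x)) ''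
            Set.Icc (0 : ℝ) 1) ≤
      2 * ((1 / 2) * ∑ x, (Real.sqrt (P x) - Real.sqrt (Q x)) ^ 2) ∧
    2 * ((1 / 2) * ∑ x, (Real.sqrt (P x) - Real.sqrt (Q x)) ^ 2) ≤
      ∑ x, (P x - Q x) ^ 2 / (P x + Q x) ∧
    ∑ x, (P x - Q x) ^ 2 / (P x + Q x) ≤ 2 * ((1 / 2) * ∑ x, |P x - Q x|) := by
  have hPQ : ∑ x, (P x + Q x) ≤ 2 := by norm_num [sum_add_distrib, hP1, hQ1]
  exact ⟨tvDist_sq_le_triangularDiscrimination_div_two hP0 hQ0 hPQ,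
    triangularDiscrimination_div_two_le_chiSqCapacity hP0 hQ0,
    chiSqCapacity_le_two_mul_hellingerSq hP0 hQ0,
    two_mul_hellingerSq_le_triangularDiscrimination hP0 hQ0,
    triangularDiscrimination_le_two_mul_tvDist hP0 hQ0⟩
end

section
/- Consider the ε-greedy policy set: N = K policies on K outcomes, where policy θ_i assigns probability (1−ε)/N + ε·𝟙{x = x_i} to outcome x, with ε ∈ (0,1) and distinct outcomes x_1,…,x_N. Then its chi-squared capacity equals ε²(N−1), attained in the limit by the uniform distribution over the policies. -/
/-!
Under a prior `τ` the mixture of the ε-greedy policies is `(1 - ε)/N + ε τ`, and each policy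
deviates from it by `ε (𝟙_i - τ)`; averaging the squared deviations over `τ` turns the
objective into `ε² ∑_x f(τ x)` with `f t = t (1 - t) / ((1 - ε)/N + ε t)`. The function `f` is
concave on `t ≥ 0`, so it lies below its tangent at `t = 1/N`; summing the tangent over
`∑ τ = 1` gives exactly `N - 1`, and the uniform prior, touching the tangent everywhere,
attains the bound.
-/

open Finset

noncomputable def epsGreedy (N : ℕ) (ε : ℝ) (i x : Fin N) : ℝ :=
  (1 - ε) / N + if x = i then ε else 0

noncomputable section ChiSquared

variable {ι α : Type*} [Fintype ι] [Fintype α]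

def mixture (θ : ι → α → ℝ) (τ : ι → ℝ) (x : α) : ℝ :=
  ∑ j, τ j * θ j x

/-- `∑_i τ i · χ²(θ i ‖ mixture θ τ)`, writing `χ²(P ‖ Q) = ∑_x Q x (P x / Q x - 1)²`. -/
def chiSqInformation (θ : ι → α → ℝ) (τ : ι → ℝ) : ℝ :=
  ∑ i, τ i * ∑ x, mixture θ τ x * (θ i x / mixture θ τ x - 1) ^ 2

lemma mul_div_sub_one_sq {K : Type*} [Field K] (p q : K) :
    q * (p / q - 1) ^ 2 = (p - q) ^ 2 / q := by
  rcases eq_or_ne q 0 with rfl | hq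
  · simp
  · field_simp

lemma chiSqInformation_eq_sum_div (θ : ι → α → ℝ) (τ : ι → ℝ) :
    chiSqInformation θ τ =
      ∑ x, (∑ i, τ i * (θ i x - mixture θ τ x) ^ 2) / mixture θ τ x := by
  simp only [chiSqInformation, mul_div_sub_one_sq, mul_sum, sum_div]
  rw [sum_comm]
  simp only [mul_div_assoc]

lemma sum_mul_indicator_sub_sq {R : Type*} [CommRing R] [DecidableEq ι] (τ : ι → R)
    (hτ : ∑ i, τ i = 1) (x : ι) :
    ∑ i, τ i * ((if x = i then 1 else 0) - τ x) ^ 2 = τ x * (1 - τ x) := by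
  have expand : ∀ i, τ i * ((if x = i then 1 else 0) - τ x) ^ 2
      = (if x = i then τ i * (1 - 2 * τ x) else 0) + τ i * τ x ^ 2 := by
    intro i; split_ifs <;> ring
  rw [sum_congr rfl fun i _ => expand i, sum_add_distrib, sum_ite_eq, ← sum_mul, hτ]
  simp only [mem_univ, if_true]
  ring

end ChiSquared

section EpsGreedy

variable {N : ℕ} {ε : ℝ}

lemma epsGreedy_eq (i x : Fin N) :
    epsGreedy N ε i x = (1 - ε) / N + ε * if x = i then 1 else 0 := by
  unfold epsGreedy; split_ifs <;> ring

lemma mixture_epsGreedy {τ : Fin N → ℝ} (hτ : ∑ i, τ i = 1) (x : Fin N) :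
    mixture (epsGreedy N ε) τ x = (1 - ε) / N + ε * τ x := by
  simp only [mixture, epsGreedy_eq, mul_add, sum_add_distrib, ← sum_mul, hτ, one_mul,
    mul_ite, mul_one, mul_zero, sum_ite_eq, mem_univ, if_true, mul_comm (τ x)]

lemma chiSqInformation_epsGreedy {τ : Fin N → ℝ} (hτ : ∑ i, τ i = 1) :
    chiSqInformation (epsGreedy N ε) τ =
      ε ^ 2 * ∑ x, τ x * (1 - τ x) / ((1 - ε) / N + ε * τ x) := by
  have deviation : ∀ i x, epsGreedy N ε i x - mixture (epsGreedy N ε) τ x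
      = ε * ((if x = i then 1 else 0) - τ x) := by
    intro i x; rw [epsGreedy_eq, mixture_epsGreedy hτ]; ring
  rw [chiSqInformation_eq_sum_div, mul_sum]
  refine sum_congr rfl fun x _ => ?_
  simp only [deviation, mul_pow, mul_left_comm _ (ε ^ 2)]
  rw [← mul_sum, sum_mul_indicator_sub_sq τ hτ, mixture_epsGreedy hτ, mul_div_assoc]

/-- The concave function `t ↦ t (1 - t) / ((1 - ε)/n + ε t)` lies below its tangent at
`t = 1/n`; the gap is `(1 - ε)(1 + ε(n - 1)) (t - 1/n)²` once the denominator is cleared. -/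
lemma mul_one_sub_div_le_tangent {n ε t : ℝ} (hn : 1 ≤ n) (hε0 : 0 ≤ ε) (hε1 : ε < 1)
    (ht : 0 ≤ t) :
    t * (1 - t) / ((1 - ε) / n + ε * t)
      ≤ (n - 1) / n + ((1 - ε) * (n - 2) - ε) * (t - 1 / n) := by
  have hn0 : 0 < n := by linarith
  have hden : 0 < (1 - ε) / n + ε * t := by
    have := div_pos (sub_pos.2 hε1) hn0
    positivity
  have gap : ((1 - ε) / n + ε * t) * ((n - 1) / n + ((1 - ε) * (n - 2) - ε) * (t - 1 / n))
      - t * (1 - t) = (1 - ε) * (1 + ε * (n - 1)) * (t - 1 / n) ^ 2 := by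
    field_simp; ring
  have hgap : 0 ≤ (1 - ε) * (1 + ε * (n - 1)) * (t - 1 / n) ^ 2 := by
    have : 0 ≤ ε * (n - 1) := mul_nonneg hε0 (by linarith)
    have : 0 ≤ 1 - ε := by linarith
    positivity
  rw [div_le_iff₀' hden]
  linarith

lemma chiSqInformation_epsGreedy_le (hN : 1 ≤ N) (hε0 : 0 ≤ ε) (hε1 : ε < 1)
    {τ : Fin N → ℝ} (hτ0 : ∀ i, 0 ≤ τ i) (hτ : ∑ i, τ i = 1) :
    chiSqInformation (epsGreedy N ε) τ ≤ ε ^ 2 * (N - 1) := by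
  have hn : (1 : ℝ) ≤ N := by exact_mod_cast hN
  set m := (1 - ε) * ((N : ℝ) - 2) - ε
  rw [chiSqInformation_epsGreedy hτ]
  gcongr
  calc ∑ x, τ x * (1 - τ x) / ((1 - ε) / N + ε * τ x)
      ≤ ∑ x : Fin N, ((N - 1) / N + m * (τ x - 1 / N)) :=
        sum_le_sum fun x _ => mul_one_sub_div_le_tangent hn hε0 hε1 (hτ0 x)
    _ = N - 1 := by
        simp only [sum_add_distrib, ← mul_sum, sum_sub_distrib, hτ, sum_const, card_univ,
          Fintype.card_fin, nsmul_eq_mul]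
        field_simp
        ring

lemma sum_fin_one_div (hN : N ≠ 0) : ∑ _ : Fin N, (1 : ℝ) / N = 1 := by
  rw [sum_const, card_univ, Fintype.card_fin, nsmul_eq_mul]
  field_simp

lemma chiSqInformation_epsGreedy_uniform (hN : N ≠ 0) :
    chiSqInformation (epsGreedy N ε) (fun _ => 1 / N) = ε ^ 2 * (N - 1) := by
  have hN0 : (N : ℝ) ≠ 0 := by exact_mod_cast hN
  rw [chiSqInformation_epsGreedy (sum_fin_one_div hN), sum_const, card_univ, Fintype.card_fin,
    nsmul_eq_mul]
  field_simp
  ring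

end EpsGreedy

/-- The chi-squared capacity of the ε-greedy policy set, i.e. the
supremum over priors `τ` of `∑_i τ i · χ²(θ i ‖ ∑_j τ j · θ j)`, equals `ε²(N−1)` for
`ε ∈ (0,1)`. -/
theorem epsGreedy_capacity (N : ℕ) (hN : 2 ≤ N) (ε : ℝ) (hε : ε ∈ Set.Ioo (0 : ℝ) 1) :
    sSup {v : ℝ | ∃ τ : Fin N → ℝ, (∀ i, 0 ≤ τ i) ∧ (∑ i, τ i = 1) ∧
        v = ∑ i, τ i * ∑ x, (∑ j, τ j * epsGreedy N ε j x) *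
              (epsGreedy N ε i x / (∑ j, τ j * epsGreedy N ε j x) - 1) ^ 2}
      = ε ^ 2 * (N - 1) := by
  obtain ⟨hε0, hε1⟩ := hε
  have hN0 : N ≠ 0 := by omega
  refine IsGreatest.csSup_eq ⟨⟨fun _ => 1 / N, fun _ => by positivity, sum_fin_one_div hN0,
    (chiSqInformation_epsGreedy_uniform hN0).symm⟩, ?_⟩
  rintro v ⟨τ, hτ0, hτ, rfl⟩
  exact chiSqInformation_epsGreedy_le (by omega) hε0.le hε1 hτ0 hτ
end

section
/- Let Θ be a set of probability distributions on a finite set 𝒳 of K outcomes, such that every θ ∈ Θ is uniform over a support of exactly M outcomes, and every outcome lies in the support of at least one policy. Then for every probability distribution τ on Θ with full support, Σ_θ τ(θ) χ²(θ || Σ_{θ'} τ(θ')θ') = K/M − 1; in particular the chi-squared capacity of Θ equals K/M − 1. -/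
open Finset

/-- The uniform distribution over a support `S` of size `M`. -/
noncomputable def unifOn {X : Type*} [DecidableEq X] (M : ℕ) (S : Finset X) (x : X) : ℝ :=
  if x ∈ S then (M : ℝ)⁻¹ else 0

lemma unifOn_nonneg {X : Type*} [DecidableEq X] (M : ℕ) (S : Finset X) (x : X) :
    0 ≤ unifOn M S x := by
  unfold unifOn; split <;> positivity

lemma unifOn_sq {X : Type*} [DecidableEq X] (M : ℕ) (S : Finset X) (x : X) :
    unifOn M S x ^ 2 = unifOn M S x / M := by
  unfold unifOn; split
  · rw [sq]; rw [div_eq_mul_inv]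
  · simp

lemma sum_unifOn {X : Type*} [DecidableEq X] [Fintype X] (M : ℕ) (hM : 0 < M)
    (S : Finset X) (hcard : S.card = M) : ∑ x, unifOn M S x = 1 := by
  unfold unifOn
  rw [Finset.sum_ite_mem, Finset.univ_inter, Finset.sum_const, hcard, nsmul_eq_mul]
  have : (M : ℝ) ≠ 0 := Nat.cast_ne_zero.mpr hM.ne'
  field_simp

open Classical in
lemma key {X ι : Type*} [DecidableEq X] [Fintype X] [Fintype ι]
    (M : ℕ) (hM : 0 < M) (S : ι → Finset X) (hcard : ∀ i, (S i).card = M)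
    (τ : ι → ℝ) (hτ : ∀ i, 0 ≤ τ i) (hsum : ∑ i, τ i = 1) :
    ∑ i, τ i * ∑ x, (∑ j, τ j * unifOn M (S j) x) *
        (unifOn M (S i) x / (∑ j, τ j * unifOn M (S j) x) - 1) ^ 2
      = (Fintype.card X : ℝ) / M - 1
        - ∑ x, (if (∑ j, τ j * unifOn M (S j) x) = 0 then (M : ℝ)⁻¹ else 0) := by
  have hMne : (M : ℝ) ≠ 0 := Nat.cast_ne_zero.mpr hM.ne'
  set Q : X → ℝ := fun x => ∑ j, τ j * unifOn M (S j) x with hQ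
  have hx : ∀ x, ∑ i, τ i * (Q x * (unifOn M (S i) x / Q x - 1) ^ 2)
      = (M : ℝ)⁻¹ - Q x - (if Q x = 0 then (M : ℝ)⁻¹ else 0) := by
    intro x
    by_cases h : Q x = 0
    · simp [h]
    · simp only [if_neg h]
      have hterm : ∀ i, τ i * (Q x * (unifOn M (S i) x / Q x - 1) ^ 2)
          = τ i * (unifOn M (S i) x) ^ 2 / Q x - 2 * (τ i * unifOn M (S i) x) + τ i * Q x := by
        intro i; field_simp; ring
      rw [Finset.sum_congr rfl fun i _ => hterm i]
      rw [Finset.sum_add_distrib, Finset.sum_sub_distrib, ← Finset.sum_div,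
        ← Finset.mul_sum, ← Finset.sum_mul, hsum]
      have h2 : ∑ i, τ i * (unifOn M (S i) x) ^ 2 = Q x / M := by
        simp only [unifOn_sq, hQ]
        rw [Finset.sum_div]
        exact Finset.sum_congr rfl fun i _ => by ring
      have h3 : ∑ i, τ i * unifOn M (S i) x = Q x := rfl
      rw [h2, h3, div_div, mul_comm (M:ℝ) (Q x), ← div_div, div_self h]
      ring
  calc ∑ i, τ i * ∑ x, Q x * (unifOn M (S i) x / Q x - 1) ^ 2
      = ∑ x, ∑ i, τ i * (Q x * (unifOn M (S i) x / Q x - 1) ^ 2) := by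
        rw [Finset.sum_comm]
        exact Finset.sum_congr rfl fun i _ => Finset.mul_sum _ _ _
    _ = ∑ x, ((M : ℝ)⁻¹ - Q x - (if Q x = 0 then (M : ℝ)⁻¹ else 0)) :=
        Finset.sum_congr rfl fun x _ => hx x
    _ = (Fintype.card X : ℝ) / M - 1 - ∑ x, (if Q x = 0 then (M : ℝ)⁻¹ else 0) := by
        rw [Finset.sum_sub_distrib, Finset.sum_sub_distrib, Finset.sum_const,
          Finset.card_univ, nsmul_eq_mul]
        have hQsum : ∑ x, Q x = 1 := by
          rw [hQ, Finset.sum_comm]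
          rw [Finset.sum_congr rfl fun j _ => (Finset.mul_sum _ _ _).symm]
          rw [Finset.sum_congr rfl fun j (_ : j ∈ univ) => by
            rw [sum_unifOn M hM (S j) (hcard j), mul_one]]
          exact hsum
        rw [hQsum]
        rw [div_eq_mul_inv]
  done

/-- If every policy is uniform over a support of exactly `M` outcomes and
every outcome is covered by some policy, then for every full-support prior `τ` the mutual
chi-squared information `∑_i τ i · χ²(θ i ‖ ∑_j τ j θ j)` equals `K/M − 1` (`K` the number
of outcomes); in particular the chi-squared capacity of the policy set equals `K/M − 1`. -/
theorem uniform_policies_capacity {X ι : Type*} [DecidableEq X] [Fintype X] [Fintype ι] [Nonempty ι]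
    (M : ℕ) (hM : 0 < M) (hMK : M ≤ Fintype.card X)
    (S : ι → Finset X) (hcard : ∀ i, (S i).card = M)
    (hcover : ∀ x : X, ∃ i, x ∈ S i) :
    (∀ τ : ι → ℝ, (∀ i, 0 < τ i) → (∑ i, τ i = 1) →
        ∑ i, τ i * ∑ x, (∑ j, τ j * unifOn M (S j) x) *
            (unifOn M (S i) x / (∑ j, τ j * unifOn M (S j) x) - 1) ^ 2
          = (Fintype.card X : ℝ) / M - 1) ∧
    sSup {v : ℝ | ∃ τ : ι → ℝ, (∀ i, 0 ≤ τ i) ∧ (∑ i, τ i = 1) ∧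
        v = ∑ i, τ i * ∑ x, (∑ j, τ j * unifOn M (S j) x) *
              (unifOn M (S i) x / (∑ j, τ j * unifOn M (S j) x) - 1) ^ 2}
      = (Fintype.card X : ℝ) / M - 1 := by
  classical
  have hMne : (M : ℝ) ≠ 0 := Nat.cast_ne_zero.mpr hM.ne'
  have part1 : ∀ τ : ι → ℝ, (∀ i, 0 < τ i) → (∑ i, τ i = 1) →
      ∑ i, τ i * ∑ x, (∑ j, τ j * unifOn M (S j) x) *
          (unifOn M (S i) x / (∑ j, τ j * unifOn M (S j) x) - 1) ^ 2
        = (Fintype.card X : ℝ) / M - 1 := by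
    intro τ hτ hsum
    rw [key M hM S hcard τ (fun i => (hτ i).le) hsum]
    have hQpos : ∀ x, (∑ j, τ j * unifOn M (S j) x) ≠ 0 := by
      intro x
      obtain ⟨i, hi⟩ := hcover x
      have : 0 < ∑ j, τ j * unifOn M (S j) x := by
        apply Finset.sum_pos' (fun j _ => mul_nonneg (hτ j).le (unifOn_nonneg _ _ _))
        refine ⟨i, Finset.mem_univ i, ?_⟩
        have : unifOn M (S i) x = (M : ℝ)⁻¹ := if_pos hi
        rw [this]
        exact mul_pos (hτ i) (inv_pos.mpr (by exact_mod_cast hM))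
      exact this.ne'
    simp [hQpos]
  refine ⟨part1, ?_⟩
  have hmem : (Fintype.card X : ℝ) / M - 1 ∈ {v : ℝ | ∃ τ : ι → ℝ, (∀ i, 0 ≤ τ i) ∧ (∑ i, τ i = 1) ∧
      v = ∑ i, τ i * ∑ x, (∑ j, τ j * unifOn M (S j) x) *
            (unifOn M (S i) x / (∑ j, τ j * unifOn M (S j) x) - 1) ^ 2} := by
    refine ⟨fun _ => (Fintype.card ι : ℝ)⁻¹, fun i => by positivity, ?_, ?_⟩
    · rw [Finset.sum_const, Finset.card_univ, nsmul_eq_mul]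
      have : (Fintype.card ι : ℝ) ≠ 0 := Nat.cast_ne_zero.mpr Fintype.card_ne_zero
      field_simp
    · refine (part1 _ (fun i => by
        have : (0:ℝ) < Fintype.card ι := Nat.cast_pos.mpr Fintype.card_pos
        exact inv_pos.mpr this) ?_).symm
      rw [Finset.sum_const, Finset.card_univ, nsmul_eq_mul]
      have : (Fintype.card ι : ℝ) ≠ 0 := Nat.cast_ne_zero.mpr Fintype.card_ne_zero
      field_simp
  have hub : ∀ v ∈ {v : ℝ | ∃ τ : ι → ℝ, (∀ i, 0 ≤ τ i) ∧ (∑ i, τ i = 1) ∧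
      v = ∑ i, τ i * ∑ x, (∑ j, τ j * unifOn M (S j) x) *
            (unifOn M (S i) x / (∑ j, τ j * unifOn M (S j) x) - 1) ^ 2},
      v ≤ (Fintype.card X : ℝ) / M - 1 := by
    rintro v ⟨τ, hτ, hsum, rfl⟩
    rw [key M hM S hcard τ hτ hsum]
    have : 0 ≤ ∑ x, (if (∑ j, τ j * unifOn M (S j) x) = 0 then (M : ℝ)⁻¹ else 0) := by
      apply Finset.sum_nonneg; intro x _; split <;> positivity
    linarith
  exact le_antisymm (csSup_le ⟨_, hmem⟩ hub) (le_csSup ⟨_, hub⟩ hmem)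
end
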